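/- Let 0 ≤ t < k and t + k ≤ n, and let x₁,y₁,...,x_t,y_t,x_{t+1},y_{t+1},z be distinct elements of X = {1,...,n}. Write P = (x₁−y₁)⋯(x_t−y_t) and A = {x₁,y₁,...,x_t,y_t}. Then P·(x_{t+1}−y_{t+1})·Σ_{k−t−1}(X∖(A∪{x_{t+1},y_{t+1}})) = P·(z−y_{t+1})·Σ_{k−t−1}(X∖(A∪{z,y_{t+1}})) + P·(x_{t+1}−z)·Σ_{k−t−1}(X∖(A∪{x_{t+1},z})) in M_k. -/
import Mathlib


instance finsetUnionCommMonoid (n : ℕ) : CommMonoid (Finset (Fin n)) where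
  mul := (· ∪ ·)
  one := ∅
  mul_assoc := Finset.union_assoc
  one_mul := Finset.empty_union
  mul_one := Finset.union_empty
  mul_comm := Finset.union_comm

/-- The Boolean algebra `2^[X]`: the `K`-vector space with basis the subsets of
`X = {1,…,n}`, with multiplication induced by union of subsets. -/
abbrev BooleanAlg (K : Type*) [CommSemiring K] (n : ℕ) :=
  MonoidAlgebra K (Finset (Fin n))

noncomputable def el {K : Type*} [CommSemiring K] {n : ℕ} (x : Fin n) : BooleanAlg K n :=
  MonoidAlgebra.single {x} 1

/-- `Σ_m(A)`: the sum of all `m`-subsets of `A`, as an element of `2^[X]`. -/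
noncomputable def Sig (K : Type*) [CommSemiring K] (n m : ℕ) (A : Finset (Fin n)) :
    BooleanAlg K n :=
  ∑ S ∈ A.powersetCard m, MonoidAlgebra.single S (1 : K)

lemma el_mul_single {K : Type*} [CommSemiring K] {n : ℕ} (x : Fin n) (T : Finset (Fin n)) :
    (el x : BooleanAlg K n) * MonoidAlgebra.single T 1 = MonoidAlgebra.single (insert x T) 1 := by
  rw [el, MonoidAlgebra.single_mul_single, one_mul]
  exact congrArg (fun s => (MonoidAlgebra.single s 1 : BooleanAlg K n)) (Finset.insert_eq x T).symm

lemma sig_insert {K : Type*} [CommSemiring K] {n m : ℕ} {x : Fin n} {S : Finset (Fin n)}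
    (hx : x ∉ S) :
    Sig K n (m + 1) (insert x S) = Sig K n (m + 1) S + el x * Sig K n m S := by
  unfold Sig
  have hdisj : Disjoint (S.powersetCard (m + 1)) ((S.powersetCard m).image (insert x)) := by
    rw [Finset.disjoint_left]
    intro A hA hA'
    obtain ⟨hAS, -⟩ := Finset.mem_powersetCard.1 hA
    obtain ⟨T, -, rfl⟩ := Finset.mem_image.1 hA'
    exact hx (hAS (Finset.mem_insert_self x T))
  have hinj : ∀ T ∈ S.powersetCard m, ∀ T' ∈ S.powersetCard m,
      insert x T = insert x T' → T = T' := by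
    intro T hT T' hT' h
    have hxT : x ∉ T := fun hxT => hx ((Finset.mem_powersetCard.1 hT).1 hxT)
    have hxT' : x ∉ T' := fun hxT' => hx ((Finset.mem_powersetCard.1 hT').1 hxT')
    rw [← Finset.erase_insert hxT, ← Finset.erase_insert hxT', h]
  rw [Finset.powersetCard_succ_insert hx, Finset.sum_union hdisj, Finset.sum_image hinj,
    Finset.mul_sum]
  simp only [el_mul_single]

lemma sig_zero {K : Type*} [CommSemiring K] {n : ℕ} (A : Finset (Fin n)) :
    Sig K n 0 A = MonoidAlgebra.single ∅ 1 := by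
  simp [Sig, Finset.powersetCard_zero]

lemma key_relation {K : Type*} [Field K] {n m : ℕ} (S : Finset (Fin n)) (u v w : Fin n)
    (hu : u ∈ S) (hv : v ∈ S) (hw : w ∈ S)
    (huv : u ≠ v) (huw : u ≠ w) (hvw : v ≠ w) :
    (el u - el v) * Sig K n m (S \ {u, v})
      = (el w - el v) * Sig K n m (S \ {w, v}) + (el u - el w) * Sig K n m (S \ {u, w}) := by
  cases m with
  | zero => rw [sig_zero, sig_zero, sig_zero]; ring
  | succ m =>
    set S' := S \ {u, v, w} with hS'
    have hS'u : u ∉ S' := by simp [hS']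
    have hS'v : v ∉ S' := by simp [hS']
    have hS'w : w ∉ S' := by simp [hS']
    have h1 : S \ {u, v} = insert w S' := by
      ext z
      simp only [hS', Finset.mem_sdiff, Finset.mem_insert, Finset.mem_singleton]
      constructor
      · rintro ⟨hz, h⟩
        by_cases hzw : z = w
        · exact Or.inl hzw
        · exact Or.inr ⟨hz, by tauto⟩
      · rintro (rfl | ⟨hz, h⟩)
        · exact ⟨hw, by tauto⟩
        · exact ⟨hz, by tauto⟩
    have h2 : S \ {w, v} = insert u S' := by
      ext z
      simp only [hS', Finset.mem_sdiff, Finset.mem_insert, Finset.mem_singleton]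
      constructor
      · rintro ⟨hz, h⟩
        by_cases hzu : z = u
        · exact Or.inl hzu
        · exact Or.inr ⟨hz, by tauto⟩
      · rintro (rfl | ⟨hz, h⟩)
        · exact ⟨hu, by tauto⟩
        · exact ⟨hz, by tauto⟩
    have h3 : S \ {u, w} = insert v S' := by
      ext z
      simp only [hS', Finset.mem_sdiff, Finset.mem_insert, Finset.mem_singleton]
      constructor
      · rintro ⟨hz, h⟩
        by_cases hzv : z = v
        · exact Or.inl hzv
        · exact Or.inr ⟨hz, by tauto⟩
      · rintro (rfl | ⟨hz, h⟩)
        · exact ⟨hv, by tauto⟩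
        · exact ⟨hz, by tauto⟩
    rw [h1, h2, h3, sig_insert hS'w, sig_insert hS'u, sig_insert hS'v]
    have hcomm : (el u : BooleanAlg K n) * el v = el v * el u := mul_comm _ _
    ring

/-- Case 2 ("Garnir-type") relation in the proof that the span of total trades is a
Specht module: with `P = (x₁−y₁)⋯(x_t−y_t)` and `A = {x₁,y₁,…,x_t,y_t}`,
`P·(x_{t+1}−y_{t+1})·Σ_{k−t−1}(X∖(A∪{x_{t+1},y_{t+1}}))` splits into two terms. -/
theorem garnir_relation_total_trades {K : Type*} [Field K] [CharZero K] (n k t : ℕ)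
    (htk : t < k) (hkn : t + k ≤ n)
    (a b : Fin t → Fin n) (u v w : Fin n)
    (hinj : Function.Injective (Sum.elim (Sum.elim a b) ![u, v, w])) :
    (∏ i, (el (a i) - el (b i))) * ((el u - el v) *
        Sig K n (k - t - 1) ((Finset.image a Finset.univ ∪ Finset.image b Finset.univ ∪ {u, v})ᶜ))
      = (∏ i, (el (a i) - el (b i))) * ((el w - el v) *
          Sig K n (k - t - 1) ((Finset.image a Finset.univ ∪ Finset.image b Finset.univ ∪ {w, v})ᶜ))
        + (∏ i, (el (a i) - el (b i))) * ((el u - el w) *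
            Sig K n (k - t - 1) ((Finset.image a Finset.univ ∪ Finset.image b Finset.univ ∪ {u, w})ᶜ)) := by
  set A := Finset.image a Finset.univ ∪ Finset.image b Finset.univ with hA
  set S := Aᶜ with hS
  -- distinctness of u, v, w
  have huv : u ≠ v := fun h => by
    have := hinj (a₁ := Sum.inr 0) (a₂ := Sum.inr 1) (by simpa using h)
    simp at this
  have huw : u ≠ w := fun h => by
    have := hinj (a₁ := Sum.inr 0) (a₂ := Sum.inr 2) (by simpa using h)
    simp at this
  have hvw : v ≠ w := fun h => by
    have := hinj (a₁ := Sum.inr 1) (a₂ := Sum.inr 2) (by simpa using h)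
    simp at this
  -- u, v, w are not in A
  have hmem : ∀ x : Fin 3, (![u, v, w] x) ∈ S := by
    intro x
    rw [hS, Finset.mem_compl, hA]
    intro hmem
    rcases Finset.mem_union.1 hmem with h | h
    · obtain ⟨i, -, hi⟩ := Finset.mem_image.1 h
      have := hinj (a₁ := Sum.inl (Sum.inl i)) (a₂ := Sum.inr x) (by simpa using hi)
      simp at this
    · obtain ⟨i, -, hi⟩ := Finset.mem_image.1 h
      have := hinj (a₁ := Sum.inl (Sum.inr i)) (a₂ := Sum.inr x) (by simpa using hi)
      simp at this
  have hu : u ∈ S := hmem 0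
  have hv : v ∈ S := hmem 1
  have hw : w ∈ S := hmem 2
  have hc : ∀ x y : Fin n, (A ∪ {x, y})ᶜ = S \ {x, y} := by
    intro x y
    ext z
    simp only [Finset.mem_compl, Finset.mem_union, Finset.mem_sdiff, hS, Finset.mem_compl,
      Finset.mem_insert, Finset.mem_singleton]
    tauto
  rw [hc u v, hc w v, hc u w, ← mul_add]
  congr 1
  exact key_relation S u v w hu hv hw huv huw hvw
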